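/- For every positive integer a with a > 1, the sum over 1 ≤ l ≤ a of the sum of partial quotients of the continued fraction expansion of l/a is O(a · (log a)^2); precisely, there is an absolute constant C such that ∑_{l=1}^{a} s₁(l/a) ≤ C · a · (log a)^2 for all a ≥ 2, where s₁(l/a) denotes the sum of the partial quotients in the continued fraction expansion [0; a₁,…,a_s] of l/a. -/

import Mathlib

/-- Sum of partial quotients of the continued fraction expansion of `l/a`
(for `0 < l ≤ a`): `s1 l a = ⌊a/l⌋ + s1 (a % l) l`. -/
def contFracPartialQuotientSum : ℕ → ℕ → ℕ
  | 0, _ => 0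
  | (l+1), a => a / (l+1) + contFracPartialQuotientSum (a % (l+1)) (l+1)
termination_by l _ => l
decreasing_by
  exact Nat.mod_lt _ l.succ_pos

/-!
Euclid's algorithm on `(l, a)` passes through states made of two consecutive remainders
`x ≤ y` and two consecutive continuants `k' ≤ k`, with `a = k * y + k' * x`; the partial
quotient produced there is `⌊y / x⌋ ≤ a / (k * x)`. A state occurs in the runs of at most two
values of `l`, since `l` is determined modulo `a` by the sign of the determinant of the
continuant matrix. For fixed `(k, x)` at most `2 * gcd k a` states occur, because
`k' * x ≡ a [MOD k]` fixes `k'` modulo `k / gcd k a` and forces `gcd k a ∣ x`. Summing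
`a / (k * x)` over these gives `∑ l, s₁(l / a) ≤ 4 * a * H_a ^ 2 ≤ 4 * a * (1 + log a) ^ 2`.
-/

open Finset

theorem card_le_div_add_one_of_modEq {S : Finset ℕ} {N m : ℕ} (hle : ∀ t ∈ S, t ≤ N)
    (hmod : ∀ t ∈ S, ∀ t' ∈ S, t ≡ t' [MOD m]) : #S ≤ N / m + 1 :=
  calc #S ≤ #(range (N / m + 1)) :=
        card_le_card_of_injOn (· / m)
          (fun t ht => mem_range.mpr (Nat.lt_succ_of_le (Nat.div_le_div_right (hle t ht))))
          (fun t ht t' ht' (h : t / m = t' / m) => by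
            rw [← Nat.div_add_mod t m, ← Nat.div_add_mod t' m, h, hmod t ht t' ht'])
    _ = N / m + 1 := card_range _

theorem harmonic_eq_sum_Icc_inv_real (n : ℕ) :
    (harmonic n : ℝ) = ∑ i ∈ Icc 1 n, (i : ℝ)⁻¹ := by
  rw [harmonic_eq_sum_Icc]
  push_cast
  rfl

theorem sum_filter_dvd_div_le_harmonic (g N : ℕ) :
    ∑ x ∈ Icc 1 N with g ∣ x, (g : ℝ) / x ≤ harmonic N := by
  rcases Nat.eq_zero_or_pos g with rfl | hg
  · rw [harmonic_eq_sum_Icc_inv_real]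
    simp only [Nat.cast_zero, zero_div, sum_const_zero]
    positivity
  calc ∑ x ∈ Icc 1 N with g ∣ x, (g : ℝ) / x
      ≤ ∑ x ∈ (Icc 1 N).image (g * ·), (g : ℝ) / x := by
        refine sum_le_sum_of_subset_of_nonneg (fun x hx => ?_) fun _ _ _ => by positivity
        obtain ⟨hx, t, rfl⟩ := mem_filter.mp hx
        simp only [mem_Icc] at hx
        exact mem_image.mpr ⟨t, mem_Icc.mpr ⟨by nlinarith, by nlinarith⟩, rfl⟩
    _ = ∑ t ∈ Icc 1 N, (t : ℝ)⁻¹ := by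
        rw [sum_image fun _ _ _ _ h => Nat.eq_of_mul_eq_mul_left hg h]
        refine sum_congr rfl fun t _ => ?_
        push_cast
        rw [div_mul_cancel_left₀ (by positivity)]
    _ = harmonic N := (harmonic_eq_sum_Icc_inv_real N).symm

/-- A state of Euclid's algorithm: consecutive remainders `x, y` and the continuants
`k = q_i`, `k' = q_{i-1}` of the partial quotients produced so far. -/
@[ext]
structure EuclidState where
  k : ℕ
  k' : ℕ
  x : ℕ
  y : ℕ
deriving DecidableEq

namespace EuclidState

def step (s : EuclidState) : EuclidState :=
  ⟨s.y / s.x * s.k + s.k', s.k, s.y % s.x, s.x⟩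

def steps (s : EuclidState) : Finset EuclidState :=
  if s.x = 0 then ∅ else insert s s.step.steps
termination_by s.x
decreasing_by exact Nat.mod_lt _ (Nat.pos_of_ne_zero ‹_›)

def start (l a : ℕ) : EuclidState := ⟨1, 0, l, a⟩

theorem forall_mem_steps (P : EuclidState → Prop) {s : EuclidState} (hs : P s)
    (hstep : ∀ t, 0 < t.x → P t → P t.step) : ∀ t ∈ s.steps, 0 < t.x ∧ P t := by
  induction s using steps.induct with
  | case1 s h => simp [steps, h]
  | case2 s h ih =>
    intro t ht
    rw [steps, if_neg h, mem_insert] at ht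
    rcases ht with rfl | ht
    · exact ⟨Nat.pos_of_ne_zero h, hs⟩
    · exact ih (hstep s (Nat.pos_of_ne_zero h) hs) t ht

theorem x_le_of_mem_steps {s t : EuclidState} (ht : t ∈ s.steps) : t.x ≤ s.x :=
  (forall_mem_steps (fun t => t.x ≤ s.x) le_rfl
    (fun _ ht h => (Nat.mod_lt _ ht).le.trans h) t ht).2

theorem sum_steps_div (s : EuclidState) :
    ∑ t ∈ s.steps, t.y / t.x = contFracPartialQuotientSum s.x s.y := by
  induction s using steps.induct with
  | case1 s h => simp [steps, h, contFracPartialQuotientSum]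
  | case2 s h ih =>
    obtain ⟨n, hn⟩ := Nat.exists_eq_succ_of_ne_zero h
    have hs : s ∉ s.step.steps := fun hmem =>
      (x_le_of_mem_steps hmem).not_gt (Nat.mod_lt _ (Nat.pos_of_ne_zero h))
    rw [steps, if_neg h, sum_insert hs, ih, hn, contFracPartialQuotientSum]
    simp [step, hn]

def Valid (a : ℕ) (s : EuclidState) : Prop :=
  s.x ≤ s.y ∧ s.k' ≤ s.k ∧ s.k.Coprime s.k' ∧ s.k * s.y + s.k' * s.x = a

theorem valid_start {l a : ℕ} (hl : l ≤ a) : (start l a).Valid a := by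
  simp [Valid, start, hl]

namespace Valid

variable {a : ℕ} {s : EuclidState}

theorem step (hs : s.Valid a) (hx : 0 < s.x) : s.step.Valid a := by
  obtain ⟨hxy, -, hcop, ha⟩ := hs
  have hq : 0 < s.y / s.x := Nat.div_pos hxy hx
  refine ⟨(Nat.mod_lt _ hx).le, (Nat.le_mul_of_pos_left _ hq).trans (Nat.le_add_right _ _),
    ?_, ?_⟩
  · simpa [EuclidState.step] using hcop.symm
  · have hdm := Nat.div_add_mod s.y s.x
    simp only [EuclidState.step]
    linear_combination ha + s.k * hdm

theorem k_pos (hs : s.Valid a) : 0 < s.k := by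
  obtain ⟨-, hk', hcop, -⟩ := hs
  refine Nat.pos_of_ne_zero fun hk => ?_
  simp [hk, Nat.le_zero.mp (hk ▸ hk')] at hcop

theorem k_le (hs : s.Valid a) (hx : 0 < s.x) : s.k ≤ a := by
  obtain ⟨hxy, -, -, ha⟩ := hs
  nlinarith

theorem x_le (hs : s.Valid a) : s.x ≤ a := by
  have hk := hs.k_pos
  obtain ⟨hxy, -, -, ha⟩ := hs
  nlinarith

theorem gcd_x_eq (hs : s.Valid a) : s.k.gcd s.x = s.k.gcd a := by
  obtain ⟨-, -, hcop, ha⟩ := hs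
  rw [← ha, Nat.gcd_mul_left_add_right, (Nat.coprime_comm.mp hcop).gcd_mul_left_cancel_right]

theorem x_mul_k'_modEq (hs : s.Valid a) : s.x * s.k' ≡ a [MOD s.k] := by
  rw [← hs.2.2.2]
  simp [Nat.ModEq, mul_comm]

end Valid

/-- `(r, u)` completes `(k, k')` to a matrix `[[k, k'], [r, u]]` of determinant `ε` mapping
`(y, x)` to `(k * y + k' * x, l)`. -/
def SecondRow (ε : ℤ) (l : ℕ) (s : EuclidState) : Prop :=
  ∃ r u : ℤ, s.k * u - s.k' * r = ε ∧ l = r * s.y + u * s.x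

theorem SecondRow.step {ε : ℤ} {l : ℕ} {s : EuclidState} (h : s.SecondRow ε l) :
    s.step.SecondRow (-ε) l := by
  obtain ⟨r, u, hdet, hl⟩ := h
  refine ⟨((s.y / s.x : ℕ) : ℤ) * r + u, r, ?_, ?_⟩
  · simp only [EuclidState.step]
    push_cast
    linear_combination -hdet
  · have hy : (s.y : ℤ) = s.x * (s.y / s.x : ℕ) + (s.y % s.x : ℕ) := by
      exact_mod_cast (Nat.div_add_mod s.y s.x).symm
    simp only [EuclidState.step]
    rw [hl, hy]
    ring

theorem SecondRow.dvd_sub {ε : ℤ} {a l₁ l₂ : ℕ} {s : EuclidState} (hs : s.Valid a)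
    (h₁ : s.SecondRow ε l₁) (h₂ : s.SecondRow ε l₂) : (a : ℤ) ∣ l₁ - l₂ := by
  obtain ⟨r₁, u₁, hdet₁, hl₁⟩ := h₁
  obtain ⟨r₂, u₂, hdet₂, hl₂⟩ := h₂
  have hdvd : (s.k : ℤ) ∣ s.k' * (r₁ - r₂) := ⟨u₁ - u₂, by linear_combination hdet₂ - hdet₁⟩
  obtain ⟨c, hc⟩ := (Nat.isCoprime_iff_coprime.mpr hs.2.2.1).dvd_of_dvd_mul_left hdvd
  have hk : (s.k : ℤ) ≠ 0 := by exact_mod_cast hs.k_pos.ne'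
  have hu : u₁ - u₂ = s.k' * c :=
    mul_left_cancel₀ hk (by linear_combination hdet₁ - hdet₂ + s.k' * hc)
  exact ⟨c, by rw [← hs.2.2.2]; push_cast; linear_combination hl₁ - hl₂ + s.y * hc + s.x * hu⟩

theorem card_filter_mem_steps_start_le_two {a : ℕ} {t : EuclidState} (ht : t.Valid a) :
    #{l ∈ Icc 1 a | t ∈ (start l a).steps} ≤ 2 := by
  classical
  have hrow : ∀ l, t ∈ (start l a).steps → t.SecondRow 1 l ∨ t.SecondRow (-1) l :=
    fun l hl => (forall_mem_steps (fun s => s.SecondRow 1 l ∨ s.SecondRow (-1) l)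
      (Or.inl ⟨0, 1, by simp [start], by simp [start]⟩)
      (fun s _ h => h.symm.imp SecondRow.step fun h => by simpa using h.step) t hl).2
  have hunique : ∀ ε, #{l ∈ Icc 1 a | t.SecondRow ε l} ≤ 1 := by
    refine fun ε => card_le_one.mpr fun l₁ h₁ l₂ h₂ => ?_
    simp only [mem_filter, mem_Icc] at h₁ h₂
    have h := Int.eq_zero_of_abs_lt_dvd (SecondRow.dvd_sub ht h₁.2 h₂.2)
      (by rw [abs_lt]; omega)
    omega
  calc #{l ∈ Icc 1 a | t ∈ (start l a).steps}
      ≤ #{l ∈ Icc 1 a | t.SecondRow 1 l ∨ t.SecondRow (-1) l} :=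
        card_le_card (monotone_filter_right _ fun l _ => hrow l)
    _ ≤ 2 := by
      rw [filter_or]
      exact (card_union_le _ _).trans (add_le_add (hunique 1) (hunique (-1)))

theorem card_filter_k_x_eq_le {a K X : ℕ} {S : Finset EuclidState}
    (hS : ∀ t ∈ S, t.Valid a) : #{t ∈ S | (t.k, t.x) = (K, X)} ≤ 2 * K.gcd a := by
  set F := {t ∈ S | (t.k, t.x) = (K, X)}
  rcases F.eq_empty_or_nonempty with hF | ⟨t₀, ht₀⟩
  · simp [hF]
  have hmem : ∀ t ∈ F, t.Valid a ∧ t.k = K ∧ t.x = X := fun t ht => by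
    obtain ⟨htS, hkx⟩ := mem_filter.mp ht
    obtain ⟨rfl, rfl⟩ := Prod.mk.inj hkx
    exact ⟨hS t htS, rfl, rfl⟩
  obtain ⟨hv₀, rfl, rfl⟩ := hmem t₀ ht₀
  have hK := hv₀.k_pos
  have hinj : Set.InjOn k' F := fun t₁ h₁ t₂ h₂ (hk' : t₁.k' = t₂.k') => by
    obtain ⟨hv₁, hk₁, hx₁⟩ := hmem t₁ h₁
    obtain ⟨hv₂, hk₂, hx₂⟩ := hmem t₂ h₂
    have hy : t₁.y = t₂.y := Nat.eq_of_mul_eq_mul_left hK (by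
      have := hv₁.2.2.2.trans hv₂.2.2.2.symm
      rw [hk₁, hx₁, hk₂, hx₂, hk'] at this
      omega)
    ext <;> simp_all
  calc #F = #(F.image k') := (card_image_of_injOn hinj).symm
    _ ≤ t₀.k / (t₀.k / t₀.k.gcd t₀.x) + 1 := by
      refine card_le_div_add_one_of_modEq ?_ ?_
      · simp only [mem_image]
        rintro _ ⟨t, ht, rfl⟩
        obtain ⟨hv, hk, -⟩ := hmem t ht
        exact hk ▸ hv.2.1
      · simp only [mem_image]
        rintro _ ⟨t₁, h₁, rfl⟩ _ ⟨t₂, h₂, rfl⟩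
        obtain ⟨hv₁, hk₁, hx₁⟩ := hmem t₁ h₁
        obtain ⟨hv₂, hk₂, hx₂⟩ := hmem t₂ h₂
        have h₁' := hv₁.x_mul_k'_modEq
        have h₂' := hv₂.x_mul_k'_modEq
        rw [hk₁, hx₁] at h₁'
        rw [hk₂, hx₂] at h₂'
        exact Nat.ModEq.cancel_left_div_gcd hK (h₁'.trans h₂'.symm)
    _ = t₀.k.gcd a + 1 := by
      rw [Nat.div_div_self (Nat.gcd_dvd_left _ _) hK.ne', hv₀.gcd_x_eq]
    _ ≤ 2 * t₀.k.gcd a := by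
      have := Nat.gcd_pos_of_pos_left a hK
      omega

theorem sum_div_le_two_mul_harmonic_sq {a : ℕ} {S : Finset EuclidState}
    (hS : ∀ t ∈ S, 0 < t.x ∧ t.Valid a) :
    ∑ t ∈ S, ((t.y / t.x : ℕ) : ℝ) ≤ 2 * a * harmonic a ^ 2 := by
  set T := {p ∈ Icc 1 a ×ˢ Icc 1 a | p.1.gcd a ∣ p.2}
  set f : ℕ × ℕ → ℝ := fun p => a / (p.1 * p.2)
  have hmaps : ∀ t ∈ S, (t.k, t.x) ∈ T := fun t ht => by
    obtain ⟨hx, hv⟩ := hS t ht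
    simp only [T, mem_filter, mem_product, mem_Icc]
    exact ⟨⟨⟨hv.k_pos, hv.k_le hx⟩, hx, hv.x_le⟩, hv.gcd_x_eq ▸ Nat.gcd_dvd_right _ _⟩
  calc ∑ t ∈ S, ((t.y / t.x : ℕ) : ℝ)
      ≤ ∑ t ∈ S, f (t.k, t.x) := sum_le_sum fun t ht => by
        obtain ⟨hx, hv⟩ := hS t ht
        have hk : (0 : ℝ) < t.k := by exact_mod_cast hv.k_pos
        have hky : (t.k * t.y : ℝ) ≤ a := by rw [← hv.2.2.2]; push_cast; nlinarith
        refine Nat.cast_div_le.trans ?_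
        rw [div_le_div_iff₀ (by positivity) (by positivity)]
        nlinarith
    _ = ∑ p ∈ T, #{t ∈ S | (t.k, t.x) = p} * f p := by
      rw [← sum_fiberwise_of_maps_to hmaps]
      refine sum_congr rfl fun p _ => ?_
      rw [sum_congr rfl fun t ht => congrArg f (mem_filter.mp ht).2, sum_const, nsmul_eq_mul]
    _ ≤ ∑ p ∈ T, (2 * p.1.gcd a : ℕ) * f p :=
      sum_le_sum fun p _ => mul_le_mul_of_nonneg_right
        (by exact_mod_cast card_filter_k_x_eq_le fun t ht => (hS t ht).2) (by positivity)
    _ = ∑ K ∈ Icc 1 a, (2 * a / K) * ∑ X ∈ Icc 1 a with K.gcd a ∣ X, (K.gcd a : ℝ) / X := by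
      rw [sum_filter, sum_product]
      refine sum_congr rfl fun K _ => ?_
      rw [mul_sum, sum_filter]
      refine sum_congr rfl fun X _ => ?_
      split_ifs
      · push_cast
        ring
      · rfl
    _ ≤ ∑ K ∈ Icc 1 a, (2 * a / K) * (harmonic a : ℝ) :=
      sum_le_sum fun K _ => mul_le_mul_of_nonneg_left (sum_filter_dvd_div_le_harmonic _ _)
        (by positivity)
    _ = 2 * a * harmonic a ^ 2 := by
      simp only [div_eq_mul_inv, ← sum_mul, ← mul_sum, ← harmonic_eq_sum_Icc_inv_real]
      ring

def runs (a : ℕ) : Finset EuclidState :=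
  (Icc 1 a).biUnion fun l => (start l a).steps

theorem valid_of_mem_runs {a : ℕ} {t : EuclidState} (ht : t ∈ runs a) :
    0 < t.x ∧ t.Valid a := by
  obtain ⟨l, hl, ht⟩ := mem_biUnion.mp ht
  exact forall_mem_steps (Valid a) (valid_start (mem_Icc.mp hl).2)
    (fun s hx hs => hs.step hx) t ht

theorem sum_contFracPartialQuotientSum_le_two_mul_sum_runs (a : ℕ) :
    ∑ l ∈ Icc 1 a, contFracPartialQuotientSum l a ≤ 2 * ∑ t ∈ runs a, t.y / t.x :=
  calc ∑ l ∈ Icc 1 a, contFracPartialQuotientSum l a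
      = ∑ l ∈ Icc 1 a, ∑ t ∈ (start l a).steps, t.y / t.x :=
        sum_congr rfl fun l _ => (sum_steps_div (start l a)).symm
    _ = ∑ t ∈ runs a, #{l ∈ Icc 1 a | t ∈ (start l a).steps} * (t.y / t.x) := by
      rw [sum_comm' (t' := runs a) (s' := fun t => {l ∈ Icc 1 a | t ∈ (start l a).steps})]
      · simp only [sum_const, smul_eq_mul]
      · intro l t
        simp only [runs, mem_biUnion, mem_filter]
        tauto
    _ ≤ ∑ t ∈ runs a, 2 * (t.y / t.x) :=
      sum_le_sum fun t ht =>
        Nat.mul_le_mul_right _ (card_filter_mem_steps_start_le_two (valid_of_mem_runs ht).2)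
    _ = 2 * ∑ t ∈ runs a, t.y / t.x := (mul_sum _ _ _).symm

end EuclidState

theorem sum_contFracPartialQuotientSum_le (a : ℕ) :
    ∑ l ∈ Icc 1 a, (contFracPartialQuotientSum l a : ℝ) ≤ 4 * a * harmonic a ^ 2 :=
  calc ∑ l ∈ Icc 1 a, (contFracPartialQuotientSum l a : ℝ)
      ≤ 2 * ∑ t ∈ EuclidState.runs a, ((t.y / t.x : ℕ) : ℝ) := by
        exact_mod_cast EuclidState.sum_contFracPartialQuotientSum_le_two_mul_sum_runs a
    _ ≤ 2 * (2 * a * harmonic a ^ 2) := by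
        gcongr
        exact EuclidState.sum_div_le_two_mul_harmonic_sq fun _ => EuclidState.valid_of_mem_runs
    _ = 4 * a * harmonic a ^ 2 := by ring

theorem sum_partial_quotients_bound :
    ∃ C : ℝ, 0 < C ∧ ∀ a : ℕ, 2 ≤ a →
      ∑ l ∈ Finset.Icc 1 a, (contFracPartialQuotientSum l a : ℝ) ≤
        C * a * (Real.log a) ^ 2 := by
  refine ⟨25, by norm_num, fun a ha => ?_⟩
  have hlog2 : Real.log 2 ≤ Real.log a := Real.log_le_log two_pos (by exact_mod_cast ha)
  have hH : (harmonic a : ℝ) ≤ 5 / 2 * Real.log a := by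
    linarith [harmonic_le_one_add_log a, Real.log_two_gt_d9]
  have hH₀ : (0 : ℝ) ≤ harmonic a := by
    rw [harmonic_eq_sum_Icc_inv_real]
    positivity
  calc ∑ l ∈ Icc 1 a, (contFracPartialQuotientSum l a : ℝ)
      ≤ 4 * a * harmonic a ^ 2 := sum_contFracPartialQuotientSum_le a
    _ ≤ 4 * a * (5 / 2 * Real.log a) ^ 2 := by gcongr
    _ = 25 * a * Real.log a ^ 2 := by ring
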